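/- arXiv:1808.01906 — 5 statements merged into one kernel-verified Lean document; each statement's English description precedes it below -/
import Mathlib

section
/- Let G = (N, E) be a finite directed graph with distinguished sink subset V, each vertex having unit demand, and let f : E → ℝ≥0 be a confluent flow (satisfying out(n) = 1 + in(n) at every non-sink n, with at most one outgoing edge of positive flow per vertex). Then the subgraph obtained by deleting all edges with zero flow is acyclic, its sinks are exactly V, and every vertex not in V has outdegree exactly one. -/
/-!
Every vertex outside `V` has outflow `1 + inflow ≥ 1`, so it has an edge of positive flow, and by
confluence that edge carries its whole outflow. Along a positive-flow path `a → b → c` the edge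
`b → c` therefore carries at least `1 + f a b`: the outflow strictly increases along every path of
the positive-flow subgraph that can be continued, so that subgraph has no cycle.
-/

open Relation

section

variable {N : Type*} [Fintype N] {f : N → N → ℝ}

theorem sum_flow_eq_of_pos (hnonneg : ∀ a b, 0 ≤ f a b)
    (hconf : ∀ n m m', 0 < f n m → 0 < f n m' → m = m') {n m : N} (h : 0 < f n m) :
    ∑ k, f n k = f n m :=
  Finset.sum_eq_single_of_mem m (Finset.mem_univ m) fun k _ hk =>
    ((hnonneg n k).lt_or_eq.resolve_left fun hpos => hk (hconf n k m hpos h)).symm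

theorem exists_flow_pos_of_notMem {V : Set N} (hnonneg : ∀ a b, 0 ≤ f a b)
    (hcons : ∀ n, n ∉ V → (∑ m, f n m) = 1 + ∑ m, f m n) {n : N} (hn : n ∉ V) :
    ∃ m, 0 < f n m := by
  have hin : 0 ≤ ∑ m, f m n := Finset.sum_nonneg fun m _ => hnonneg m n
  have hout : 0 < ∑ m, f n m := by rw [hcons n hn]; linarith
  obtain ⟨m, -, hm⟩ := Finset.exists_ne_zero_of_sum_ne_zero hout.ne'
  exact ⟨m, (hnonneg n m).lt_of_ne' hm⟩

theorem sum_flow_lt_of_pos {V : Set N} (hV : ∀ v ∈ V, ∀ m, f v m = 0)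
    (hnonneg : ∀ a b, 0 ≤ f a b) (hconf : ∀ n m m', 0 < f n m → 0 < f n m' → m = m')
    (hcons : ∀ n, n ∉ V → (∑ m, f n m) = 1 + ∑ m, f m n)
    {a b : N} (hab : 0 < f a b) (hb : ∃ c, 0 < f b c) :
    ∑ k, f a k < ∑ k, f b k := by
  obtain ⟨c, hbc⟩ := hb
  have hbV : b ∉ V := fun hbV => hbc.ne' (hV b hbV c)
  have hin : f a b ≤ ∑ k, f k b :=
    Finset.single_le_sum (fun k _ => hnonneg k b) (Finset.mem_univ a)
  rw [sum_flow_eq_of_pos hnonneg hconf hab, hcons b hbV]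
  linarith

theorem sum_flow_lt_of_transGen {V : Set N} (hV : ∀ v ∈ V, ∀ m, f v m = 0)
    (hnonneg : ∀ a b, 0 ≤ f a b) (hconf : ∀ n m m', 0 < f n m → 0 < f n m' → m = m')
    (hcons : ∀ n, n ∉ V → (∑ m, f n m) = 1 + ∑ m, f m n)
    {a b : N} (h : TransGen (fun a b => 0 < f a b) a b) (hb : ∃ c, 0 < f b c) :
    ∑ k, f a k < ∑ k, f b k := by
  induction h using TransGen.head_induction_on with
  | single hab => exact sum_flow_lt_of_pos hV hnonneg hconf hcons hab hb
  | head hac hcb ih =>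
    obtain ⟨d, hcd, -⟩ := TransGen.head'_iff.mp hcb
    exact (sum_flow_lt_of_pos hV hnonneg hconf hcons hac ⟨d, hcd⟩).trans ih
end

/-- If f is a confluent flow with unit demand on a finite directed graph (N, E) with
distinguished sink subset V, then the subgraph of positive-flow edges is acyclic, its
sinks are exactly V, and every vertex outside V has outdegree exactly one. -/
theorem stmt_2 {N : Type*} [Fintype N] (E : N → N → Prop) (V : Set N) (f : N → N → ℝ)
    (hVsink : ∀ v ∈ V, ∀ m, ¬ E v m)
    (hsupp : ∀ a b, ¬ E a b → f a b = 0)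
    (hnonneg : ∀ a b, 0 ≤ f a b)
    (hcons : ∀ n, n ∉ V → (∑ m, f n m) = 1 + ∑ m, f m n)
    (hconf : ∀ n m m', 0 < f n m → 0 < f n m' → m = m') :
    (∀ n, ¬ Relation.TransGen (fun a b => 0 < f a b) n n) ∧
    (∀ n, ((∀ m, ¬ (0 < f n m)) ↔ n ∈ V)) ∧
    (∀ n, n ∉ V → ∃! m, 0 < f n m) := by
  have hV : ∀ v ∈ V, ∀ m, f v m = 0 := fun v hv m => hsupp v m (hVsink v hv m)
  refine ⟨fun n hcycle => ?_, fun n => ⟨fun hsink => ?_, fun hn m hm => ?_⟩, fun n hn => ?_⟩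
  · obtain ⟨m, hm, -⟩ := TransGen.head'_iff.mp hcycle
    exact (sum_flow_lt_of_transGen hV hnonneg hconf hcons hcycle ⟨m, hm⟩).false
  · by_contra hn
    obtain ⟨m, hm⟩ := exists_flow_pos_of_notMem hnonneg hcons hn
    exact hsink m hm
  · exact hm.ne' (hV n hn m)
  · obtain ⟨m, hm⟩ := exists_flow_pos_of_notMem hnonneg hcons hn
    exact ⟨m, hm, fun m' hm' => hconf n m' m hm' hm⟩
end

section
/- Let f be a confluent flow with unit demand on a finite directed graph. Then the subgraph of positive-flow edges contains no directed cycle. -/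
/-!
The outflow `∑ m, f a m` of a vertex is a potential that increases strictly along every
positive-flow edge `a → b` leaving a non-terminal vertex `b`: by confluence the outflow of `a`
is the single value `f a b`, which is part of the inflow of `b`, and `b` is not a sink, so
conservation gives outflow `b = 1 + inflow b > outflow a`. Around a directed cycle every vertex
is non-terminal, so the potential would exceed itself.
-/

open Relation

theorem Relation.TransGen.lt_of_rel_imp_lt {α β : Type*} [Preorder β] {r : α → α → Prop}
    {φ : α → β} (hφ : ∀ a b c, r a b → r b c → φ a < φ b) {a b c : α}
    (hab : TransGen r a b) (hbc : r b c) : φ a < φ b := by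
  induction hab generalizing c with
  | single hab => exact hφ _ _ _ hab hbc
  | tail _ hxb ih => exact (ih hxb).trans (hφ _ _ _ hxb hbc)

theorem Relation.TransGen.irrefl_of_rel_imp_lt {α β : Type*} [Preorder β] {r : α → α → Prop}
    {φ : α → β} (hφ : ∀ a b c, r a b → r b c → φ a < φ b) (a : α) : ¬ TransGen r a a := by
  intro haa
  obtain ⟨c, hac, -⟩ := TransGen.head'_iff.mp haa
  exact lt_irrefl _ (haa.lt_of_rel_imp_lt hφ hac)

section ConfluentFlow

variable {N : Type*} [Fintype N] {f : N → N → ℝ}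

theorem sum_eq_of_pos_of_confluent (hnonneg : ∀ a b, 0 ≤ f a b)
    (hconf : ∀ n m m', 0 < f n m → 0 < f n m' → m = m') {a b : N} (hab : 0 < f a b) :
    ∑ m, f a m = f a b :=
  Finset.sum_eq_single_of_mem b (Finset.mem_univ b) fun m _ hmb =>
    (hnonneg a m).eq_or_lt.elim Eq.symm fun ham => absurd (hconf a m b ham hab) hmb

theorem sum_lt_sum_of_confluent_flow {E : N → N → Prop} {V : Set N}
    (hVsink : ∀ v ∈ V, ∀ m, ¬ E v m)
    (hsupp : ∀ a b, ¬ E a b → f a b = 0)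
    (hnonneg : ∀ a b, 0 ≤ f a b)
    (hcons : ∀ n, n ∉ V → (∑ m, f n m) = 1 + ∑ m, f m n)
    (hconf : ∀ n m m', 0 < f n m → 0 < f n m' → m = m') {a b c : N}
    (hab : 0 < f a b) (hbc : 0 < f b c) :
    ∑ m, f a m < ∑ m, f b m := by
  have hbV : b ∉ V := fun hb => hbc.ne' (hsupp b c (hVsink b hb c))
  have hab_le_inflow : f a b ≤ ∑ m, f m b :=
    Finset.single_le_sum (fun m _ => hnonneg m b) (Finset.mem_univ a)
  rw [sum_eq_of_pos_of_confluent hnonneg hconf hab, hcons b hbV]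
  linarith

end ConfluentFlow

/-- The positive-flow edges of a confluent flow with unit demand on a finite directed
graph contain no directed cycle. -/
theorem stmt_3 {N : Type*} [Fintype N] (E : N → N → Prop) (V : Set N) (f : N → N → ℝ)
    (hVsink : ∀ v ∈ V, ∀ m, ¬ E v m)
    (hsupp : ∀ a b, ¬ E a b → f a b = 0)
    (hnonneg : ∀ a b, 0 ≤ f a b)
    (hcons : ∀ n, n ∉ V → (∑ m, f n m) = 1 + ∑ m, f m n)
    (hconf : ∀ n m m', 0 < f n m → 0 < f n m' → m = m') :
    ∀ n, ¬ Relation.TransGen (fun a b => 0 < f a b) n n :=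
  TransGen.irrefl_of_rel_imp_lt (φ := fun a => ∑ m, f a m) fun _ _ _ hab hbc =>
    sum_lt_sum_of_confluent_flow hVsink hsupp hnonneg hcons hconf hab hbc
end

section
/- Let (N, E') be a delegation graph with voter set V, and define the weight w(n) of each node recursively by w(n) = 1 + Σ_{(m,n)∈E'} w(m). If E' ⊆ E and we define f on E by f(e) = w(n) when e is the unique outgoing edge of a non-voter n in E', and f(e) = 0 otherwise, then f is a confluent flow with unit demand on (N, E). -/
/-!
Acyclicity on a finite node set makes the delegation relation well-founded, so induction
along it shows every weight is at least 1; hence `f` is nonnegative and vanishes off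
`E' ⊆ E`. A non-voter has exactly one outgoing edge, carrying `w n`, while its incoming edges
carry `∑_{(m,n) ∈ E'} w m = w n - 1` by the defining recursion: this is flow conservation
with unit demand.
-/

namespace Relation

theorem wellFounded_of_forall_not_transGen_self {N : Type*} [Finite N] {r : N → N → Prop}
    (hacyc : ∀ n, ¬ TransGen r n n) : WellFounded r :=
  have : Std.Irrefl (TransGen r) := ⟨hacyc⟩
  (Finite.wellFounded_of_trans_of_irrefl (TransGen r)).mono fun _ _ => TransGen.single

end Relation

open scoped Classical in
theorem WellFounded.one_le_of_eq_one_add_sum {N : Type*} [Fintype N] {r : N → N → Prop}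
    (hr : WellFounded r) {w : N → ℝ} (hw : ∀ n, w n = 1 + ∑ m, if r m n then w m else 0)
    (n : N) : 1 ≤ w n := by
  induction n using hr.induction with
  | _ n ih =>
    have : 0 ≤ ∑ m, if r m n then w m else 0 :=
      Finset.sum_nonneg fun m _ => by
        split_ifs with h
        · linarith [ih m h]
        · rfl
    linarith [hw n]

theorem Fintype.sum_ite_of_existsUnique {N M : Type*} [Fintype N] [AddCommMonoid M]
    {p : N → Prop} [DecidablePred p] (hp : ∃! m, p m) (c : M) : ∑ m, (if p m then c else 0) = c := by
  obtain ⟨m, hm, huniq⟩ := hp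
  rw [Fintype.sum_eq_single m fun k hk => if_neg fun hpk => hk (huniq k hpk), if_pos hm]

open scoped Classical in
theorem stmt_4_general {N : Type*} [Fintype N] (E E' : N → N → Prop) (V : Set N) (w : N → ℝ)
    (hsub : ∀ a b, E' a b → E a b)
    (hacyc : ∀ n, ¬ Relation.TransGen E' n n)
    (hsinks : ∀ n, ((∀ m, ¬ E' n m) ↔ n ∈ V))
    (houtdeg : ∀ n, n ∉ V → ∃! m, E' n m)
    (hw : ∀ n, w n = 1 + ∑ m, if E' m n then w m else 0)
    (f : N → N → ℝ)
    (hf : ∀ a b, f a b = if E' a b then w a else 0) :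
    (∀ a b, ¬ E a b → f a b = 0) ∧
    (∀ a b, 0 ≤ f a b) ∧
    (∀ n, n ∉ V → (∑ m, f n m) = 1 + ∑ m, f m n) ∧
    (∀ n m m', 0 < f n m → 0 < f n m' → m = m') := by
  have one_le_w :=
    (Relation.wellFounded_of_forall_not_transGen_self hacyc).one_le_of_eq_one_add_sum hw
  have edge_of_pos : ∀ a b, 0 < f a b → E' a b := fun a b h => by
    by_contra hab
    simp [hf, hab] at h
  refine ⟨fun a b hab => ?_, fun a b => ?_, fun n hn => ?_, fun n m m' hm hm' => ?_⟩
  · rw [hf, if_neg fun h => hab (hsub a b h)]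
  · rw [hf]
    split_ifs <;> linarith [one_le_w a]
  · simp only [hf]
    rw [Fintype.sum_ite_of_existsUnique (houtdeg n hn), hw n]
  · have hn : n ∉ V := fun hV => (hsinks n).mpr hV m (edge_of_pos n m hm)
    exact (houtdeg n hn).unique (edge_of_pos n m hm) (edge_of_pos n m' hm')

open scoped Classical in
/-- Given a delegation graph (N, E') with voter set V contained in a graph (N, E), and
the recursively defined weights w(n) = 1 + Σ_{(m,n) ∈ E'} w(m), the function sending the
unique outgoing edge of each non-voter n to w(n) (and all other edges to 0) is a
confluent flow with unit demand on (N, E). -/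
theorem stmt_4 {N : Type*} [Fintype N] (E E' : N → N → Prop) (V : Set N) (w : N → ℝ)
    (hVsink : ∀ v ∈ V, ∀ m, ¬ E v m)
    (hsub : ∀ a b, E' a b → E a b)
    (hacyc : ∀ n, ¬ Relation.TransGen E' n n)
    (hsinks : ∀ n, ((∀ m, ¬ E' n m) ↔ n ∈ V))
    (houtdeg : ∀ n, n ∉ V → ∃! m, E' n m)
    (hw : ∀ n, w n = 1 + ∑ m, if E' m n then w m else 0)
    (f : N → N → ℝ)
    (hf : ∀ a b, f a b = if E' a b then w a else 0) :
    (∀ a b, ¬ E a b → f a b = 0) ∧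
    (∀ a b, 0 ≤ f a b) ∧
    (∀ n, n ∉ V → (∑ m, f n m) = 1 + ∑ m, f m n) ∧
    (∀ n m m', 0 < f n m → 0 < f n m' → m = m') :=
  stmt_4_general E E' V w hsub hacyc hsinks houtdeg hw f hf
end

section
/- Let (α_k) be the sequence defined by α_1 = 1 and, for k > 1, α_k the unique root in (0, α_{k−1}) of d·x² + k·d·(α_{k−1}² − x²) − x = 0, with d ∈ (0,1). Then α_k → 0 as k → ∞. -/
/-!
The sequence decreases to its infimum `L ≥ 0`. Since `α_k ≤ 1`, the recursion gives
`k d (α_{k-1}² - α_k²) = α_k (1 - d α_k) ≥ (1 - d) α_k`, so `α_{k-1}² - α_k² ≥ (1 - d) L / (d k)`.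
The left-hand sides telescope to a convergent series, while `∑ 1/k` diverges; hence `L = 0`.
-/

open Filter Topology Set

lemma sq_sub_sq_ge_of_root {d x y k : ℝ} (hd : d ∈ Ioo (0 : ℝ) 1) (hx : x ∈ Ioc (0 : ℝ) 1)
    (hk : 0 < k) (h : d * x ^ 2 + k * d * (y ^ 2 - x ^ 2) - x = 0) :
    (1 - d) / d * x / k ≤ y ^ 2 - x ^ 2 := by
  obtain ⟨hd0, hd1⟩ := hd
  obtain ⟨hx0, hx1⟩ := hx
  have hkd : k * d * (y ^ 2 - x ^ 2) = x * (1 - d * x) := by linarith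
  have hlow : x * (1 - d) ≤ x * (1 - d * x) := by gcongr; nlinarith
  calc (1 - d) / d * x / k = x * (1 - d) / (k * d) := by field_simp
    _ ≤ x * (1 - d * x) / (k * d) := by gcongr
    _ = y ^ 2 - x ^ 2 := by rw [← hkd]; field_simp

lemma tendsto_zero_of_antitone_of_sq_sub_sq_ge {β : ℕ → ℝ} {C : ℝ} (hβ : Antitone β)
    (h0 : ∀ n, 0 ≤ β n) (hC : 0 < C)
    (hstep : ∀ n : ℕ, C * β (n + 1) / (n + 2) ≤ β n ^ 2 - β (n + 1) ^ 2) :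
    Tendsto β atTop (𝓝 0) := by
  have hbdd : BddBelow (range β) := ⟨0, by rintro _ ⟨n, rfl⟩; exact h0 n⟩
  have hlim := tendsto_atTop_ciInf hβ hbdd
  suffices hL : ⨅ n, β n = 0 by rwa [hL] at hlim
  by_contra hL
  have hLpos : 0 < ⨅ n, β n := (le_ciInf h0).lt_of_ne' hL
  have hsq : Summable fun n => β n ^ 2 - β (n + 1) ^ 2 := by
    refine summable_of_sum_range_le (c := β 0 ^ 2) (fun n => ?_) (fun N => ?_)
    · nlinarith [hβ n.le_succ, h0 (n + 1)]
    · rw [Finset.sum_range_sub']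
      nlinarith
  have harm : Summable fun n : ℕ => C * (⨅ n, β n) * (1 / ((n + 2 : ℕ) : ℝ)) := by
    refine hsq.of_nonneg_of_le (fun n => by positivity) (fun n => le_trans ?_ (hstep n))
    rw [mul_one_div]
    push_cast
    gcongr
    exact ciInf_le hbdd _
  rw [summable_mul_left_iff (by positivity)] at harm
  exact Real.not_summable_one_div_natCast ((summable_nat_add_iff 2).1 harm)

open Filter in
/-- With α₁ = 1 and, for k > 1, α_k the unique root in (0, α_{k-1}) of
d x² + k d (α_{k-1}² − x²) − x = 0 (for d ∈ (0,1)), one has α_k → 0 as k → ∞. -/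
theorem stmt_12 (d : ℝ) (hd : d ∈ Set.Ioo (0 : ℝ) 1) (α : ℕ → ℝ)
    (h1 : α 1 = 1)
    (hroot : ∀ k : ℕ, 2 ≤ k → α k ∈ Set.Ioo 0 (α (k - 1)) ∧
      d * (α k) ^ 2 + (k : ℝ) * d * ((α (k - 1)) ^ 2 - (α k) ^ 2) - α k = 0) :
    Tendsto α atTop (nhds 0) := by
  -- `α 0` is unconstrained, so we work with the shifted sequence `n ↦ α (n + 1)`.
  have hsucc (n : ℕ) : α (n + 2) ∈ Ioo 0 (α (n + 1)) ∧
      d * α (n + 2) ^ 2 + ((n + 2 : ℕ) : ℝ) * d * (α (n + 1) ^ 2 - α (n + 2) ^ 2) - α (n + 2) = 0 :=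
    hroot (n + 2) le_add_self
  have hanti : Antitone fun n => α (n + 1) := antitone_nat_of_succ_le fun n => (hsucc n).1.2.le
  have hpos : ∀ n, 0 < α (n + 1)
    | 0 => h1 ▸ one_pos
    | n + 1 => (hsucc n).1.1
  have hle (n : ℕ) : α (n + 1) ≤ 1 := h1 ▸ hanti n.zero_le
  refine (tendsto_add_atTop_iff_nat 1).1 <|
    tendsto_zero_of_antitone_of_sq_sub_sq_ge hanti (fun n => (hpos n).le)
      (div_pos (sub_pos.2 hd.2) hd.1) fun n => ?_
  simpa using sq_sub_sq_ge_of_root hd ⟨hpos (n + 1), hle (n + 1)⟩ (by positivity) (hsucc n).2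
end

section
/- Let k₀ ≥ 1 be an integer and f(k₀) a real with 0 < f(k₀) < 1/(e²·k₀), and define f(k₀+n+1) = (k₀+n+1)·f(k₀+n)² for n ≥ 0. Then for all n ≥ 0, exp(−c₁·2ⁿ) ≤ f(k₀+n) ≤ exp(−c₂·2ⁿ), where c₁ = −log f(k₀) and c₂ = −log(f(k₀)·k₀·e²), and both c₁, c₂ are positive. -/
/-!
The lower bound comes from dropping the factor `k₀ + n + 1 ≥ 1`, which leaves `f(k₀+n+1) ≥ f(k₀+n)²`.
For the upper bound, the rescaled sequence `x n = f(k₀+n) · k₀ · e^{n+2}` satisfies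
`x (n+1) ≤ x n²`, because the ratio is `(k₀+n+1) / (k₀ e^{n+1}) ≤ 1`; hence
`f(k₀+n) ≤ x n ≤ x 0 ^ 2ⁿ = (f(k₀) k₀ e²) ^ 2ⁿ`.
-/

open Real

theorem pow_two_pow_le_of_sq_le_succ {u : ℕ → ℝ} (h0 : 0 ≤ u 0)
    (hu : ∀ n, u n ^ 2 ≤ u (n + 1)) (n : ℕ) : u 0 ^ 2 ^ n ≤ u n := by
  induction n with
  | zero => simp
  | succ n ih =>
    calc u 0 ^ 2 ^ (n + 1) = (u 0 ^ 2 ^ n) ^ 2 := by rw [pow_succ, pow_mul]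
      _ ≤ u n ^ 2 := pow_le_pow_left₀ (by positivity) ih 2
      _ ≤ u (n + 1) := hu n

theorem le_pow_two_pow_of_succ_le_sq {x : ℕ → ℝ} (hx0 : ∀ n, 0 ≤ x n)
    (hx : ∀ n, x (n + 1) ≤ x n ^ 2) (n : ℕ) : x n ≤ x 0 ^ 2 ^ n := by
  induction n with
  | zero => simp
  | succ n ih =>
    calc x (n + 1) ≤ x n ^ 2 := hx n
      _ ≤ (x 0 ^ 2 ^ n) ^ 2 := pow_le_pow_left₀ (hx0 n) ih 2
      _ = x 0 ^ 2 ^ (n + 1) := by rw [← pow_mul, ← pow_succ]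

theorem add_add_one_le_mul_exp {k : ℝ} (hk : 1 ≤ k) (n : ℕ) : k + n + 1 ≤ k * exp (n + 1) := by
  have h := add_one_le_exp ((n : ℝ) + 1)
  nlinarith

theorem pow_two_pow_le_of_sq_recursion {k : ℝ} {u : ℕ → ℝ} (hk : 1 ≤ k)
    (hu : ∀ n, u (n + 1) = (k + n + 1) * u n ^ 2) (h0 : 0 ≤ u 0) (n : ℕ) : u 0 ^ 2 ^ n ≤ u n := by
  refine pow_two_pow_le_of_sq_le_succ h0 (fun n ↦ ?_) n
  rw [hu n]
  exact le_mul_of_one_le_left (sq_nonneg _) (by linarith [n.cast_nonneg (α := ℝ)])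

theorem le_pow_two_pow_of_sq_recursion {k : ℝ} {u : ℕ → ℝ} (hk : 1 ≤ k)
    (hu : ∀ n, u (n + 1) = (k + n + 1) * u n ^ 2) (h0 : 0 < u 0) (n : ℕ) :
    u n ≤ (u 0 * k * exp 2) ^ 2 ^ n := by
  have hu_nonneg (n : ℕ) : 0 ≤ u n :=
    le_trans (by positivity) (pow_two_pow_le_of_sq_recursion hk hu h0.le n)
  set x : ℕ → ℝ := fun n ↦ u n * k * exp (n + 2) with hx
  have hx_succ (n : ℕ) : x (n + 1) ≤ x n ^ 2 := by
    have hexp : exp (n + 1) * exp ((n + 1 : ℕ) + 2 : ℝ) = exp (n + 2) ^ 2 := by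
      rw [← exp_add, sq, ← exp_add]; push_cast; ring_nf
    calc x (n + 1) = (k + n + 1) * (u n ^ 2 * k * exp ((n + 1 : ℕ) + 2 : ℝ)) := by
          simp only [hx, hu n]; ring
      _ ≤ k * exp (n + 1) * (u n ^ 2 * k * exp ((n + 1 : ℕ) + 2 : ℝ)) :=
          mul_le_mul_of_nonneg_right (add_add_one_le_mul_exp hk n)
            (by have := hu_nonneg n; positivity)
      _ = x n ^ 2 := by simp only [hx]; linear_combination (u n ^ 2 * k ^ 2) * hexp
  have hx_nonneg (n : ℕ) : 0 ≤ x n :=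
    mul_nonneg (mul_nonneg (hu_nonneg n) (by linarith)) (exp_pos _).le
  calc u n ≤ u n * (k * exp (n + 2)) := le_mul_of_one_le_right (hu_nonneg n)
          (one_le_mul_of_one_le_of_one_le hk (one_le_exp (by positivity)))
    _ = x n := (mul_assoc _ _ _).symm
    _ ≤ x 0 ^ 2 ^ n := le_pow_two_pow_of_succ_le_sq hx_nonneg hx_succ n
    _ = (u 0 * k * exp 2) ^ 2 ^ n := by simp [hx]

theorem exp_log_mul_two_pow {a : ℝ} (ha : 0 < a) (n : ℕ) : exp (log a * 2 ^ n) = a ^ 2 ^ n := by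
  rw [← rpow_def_of_pos ha, ← Nat.cast_ofNat, ← Nat.cast_pow, rpow_natCast]

/-- Let k₀ ≥ 1 and 0 < f(k₀) < 1/(e² k₀), with f(k) = k f(k−1)² for k > k₀. Then
for all n ≥ 0: exp(−c₁ 2ⁿ) ≤ f(k₀+n) ≤ exp(−c₂ 2ⁿ), where c₁ = −log f(k₀) and
c₂ = −log(f(k₀) k₀ e²) are both positive. -/
theorem stmt_15 (k₀ : ℕ) (hk₀ : 1 ≤ k₀) (f : ℕ → ℝ)
    (hpos : 0 < f k₀)
    (hsmall : f k₀ < 1 / (Real.exp 2 * k₀))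
    (hf : ∀ n : ℕ, f (k₀ + n + 1) = ((k₀ + n + 1 : ℕ) : ℝ) * (f (k₀ + n)) ^ 2) :
    0 < -Real.log (f k₀) ∧
    0 < -Real.log (f k₀ * k₀ * Real.exp 2) ∧
    ∀ n : ℕ,
      Real.exp (-(-Real.log (f k₀)) * 2 ^ n) ≤ f (k₀ + n) ∧
      f (k₀ + n) ≤ Real.exp (-(-Real.log (f k₀ * k₀ * Real.exp 2)) * 2 ^ n) := by
  have hk : (1 : ℝ) ≤ k₀ := by exact_mod_cast hk₀
  have hu (n : ℕ) : f (k₀ + (n + 1)) = (k₀ + n + 1) * f (k₀ + n) ^ 2 := by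
    rw [← add_assoc, hf n]; push_cast; rfl
  have hsmall' : f k₀ * k₀ * exp 2 < 1 := by
    rw [lt_div_iff₀ (by positivity)] at hsmall; linarith
  have hlt_one : f k₀ < 1 := by
    have : 1 ≤ (k₀ : ℝ) * exp 2 := one_le_mul_of_one_le_of_one_le hk (one_le_exp (by norm_num))
    nlinarith
  refine ⟨neg_pos.2 (log_neg hpos hlt_one), neg_pos.2 (log_neg (by positivity) hsmall'),
    fun n ↦ ⟨?_, ?_⟩⟩
  · rw [neg_neg, exp_log_mul_two_pow hpos]
    exact pow_two_pow_le_of_sq_recursion (u := fun n ↦ f (k₀ + n)) hk hu hpos.le n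
  · rw [neg_neg, exp_log_mul_two_pow (by positivity)]
    exact le_pow_two_pow_of_sq_recursion (u := fun n ↦ f (k₀ + n)) hk hu hpos n
end
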